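/- Let u : ℝ² → ℝ be smooth with coordinates (x¹, x²) = (x, t). Pull back the forms ω̃¹ = 2λ₁ dx², ω̃² = (λ₁/2) dx¹ + (uλ₁ − λ₁₁) dx², ω̃³ = dx¹ + 2u dx² along the 2-jet lift λ₁ = u_x, λ₁₁ = u_xx. Then dω̃² − ω̃¹ ∧ ω̃² = (−(1/2)u_xt + (1/2)(u²)_xx − u_xxx + (u_x)²) dx ∧ dt; in particular the second structure equation dω̃² = ω̃¹ ∧ ω̃² holds on the lift if and only if u satisfies u_xt = (u²)_xx − 2u_xxx + 2(u_x)². -/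

import Mathlib

open Real

/-- Partial derivative in the first (x) coordinate. -/
noncomputable def px (f : ℝ × ℝ → ℝ) (p : ℝ × ℝ) : ℝ := fderiv ℝ f p (1, 0)

/-- Partial derivative in the second (t) coordinate. -/
noncomputable def pt (f : ℝ × ℝ → ℝ) (p : ℝ × ℝ) : ℝ := fderiv ℝ f p (0, 1)

/-- The `dx ∧ dt` coefficient of the exterior derivative of a one-form
`a dx + b dt` on `ℝ²`, represented by the pair `(a, b)`. -/
noncomputable def d2 (ω : (ℝ × ℝ → ℝ) × (ℝ × ℝ → ℝ)) (p : ℝ × ℝ) : ℝ :=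
  px ω.2 p - pt ω.1 p

/-- The `dx ∧ dt` coefficient of the wedge product of two one-forms on `ℝ²`. -/
def wedge2 (α β : (ℝ × ℝ → ℝ) × (ℝ × ℝ → ℝ)) (p : ℝ × ℝ) : ℝ :=
  α.1 p * β.2 p - α.2 p * β.1 p

lemma px_contDiff {f : ℝ × ℝ → ℝ} (hf : ContDiff ℝ (⊤ : ℕ∞) f) : ContDiff ℝ (⊤ : ℕ∞) (px f) :=
  (hf.fderiv_right (by simp)).clm_apply contDiff_const

lemma px_mul {f g : ℝ × ℝ → ℝ} {p : ℝ × ℝ} (hf : DifferentiableAt ℝ f p)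
    (hg : DifferentiableAt ℝ g p) :
    px (fun q => f q * g q) p = px f p * g p + f p * px g p := by
  simp only [px, fderiv_fun_mul hf hg, ContinuousLinearMap.add_apply,
    ContinuousLinearMap.smul_apply, smul_eq_mul]
  ring

lemma px_sub {f g : ℝ × ℝ → ℝ} {p : ℝ × ℝ} (hf : DifferentiableAt ℝ f p)
    (hg : DifferentiableAt ℝ g p) :
    px (fun q => f q - g q) p = px f p - px g p := by
  simp [px, fderiv_fun_sub hf hg]

lemma px_const_mul {f : ℝ × ℝ → ℝ} {p : ℝ × ℝ} (c : ℝ) (hf : DifferentiableAt ℝ f p) :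
    px (fun q => c * f q) p = c * px f p := by
  simp [px, fderiv_const_mul hf]

lemma pt_div_const {f : ℝ × ℝ → ℝ} {p : ℝ × ℝ} (c : ℝ) (hf : DifferentiableAt ℝ f p) :
    pt (fun q => f q / c) p = pt f p / c := by
  have : (fun q => f q / c) = fun q => c⁻¹ * f q := by funext q; ring
  rw [this, pt, fderiv_const_mul hf]
  simp [pt]; ring

/-- On the 2-jet lift `λ₁ = u_x`, `λ₁₁ = u_xx` of a smooth `u`, the second structure
equation has curvature `dω̃² - ω̃¹ ∧ ω̃² = (-(1/2)u_xt + (1/2)(u²)_xx - u_xxx + (u_x)²) dx∧dt`;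
in particular `dω̃² = ω̃¹ ∧ ω̃²` holds iff `u_xt = (u²)_xx - 2u_xxx + 2(u_x)²`. -/
theorem stmt11 (u : ℝ × ℝ → ℝ) (hu : ContDiff ℝ (⊤ : ℕ∞) u)
    (ω1 ω2 ω3 : (ℝ × ℝ → ℝ) × (ℝ × ℝ → ℝ))
    (hω1 : ω1 = (fun _ => 0, fun p => 2 * px u p))
    (hω2 : ω2 = (fun p => px u p / 2, fun p => u p * px u p - px (px u) p))
    (hω3 : ω3 = (fun _ => 1, fun p => 2 * u p)) :
    (∀ p, d2 ω2 p - wedge2 ω1 ω2 p =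
        -(1 / 2) * pt (px u) p + (1 / 2) * px (px (fun q => (u q) ^ 2)) p
          - px (px (px u)) p + (px u p) ^ 2) ∧
    ((∀ p, d2 ω2 p - wedge2 ω1 ω2 p = 0) ↔
      (∀ p, pt (px u) p = px (px (fun q => (u q) ^ 2)) p
        - 2 * px (px (px u)) p + 2 * (px u p) ^ 2)) := by
  have hux : ContDiff ℝ (⊤ : ℕ∞) (px u) := px_contDiff hu
  have huxx : ContDiff ℝ (⊤ : ℕ∞) (px (px u)) := px_contDiff hux
  have hdu : ∀ p, DifferentiableAt ℝ u p := fun p => hu.differentiable (by simp) p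
  have hdux : ∀ p, DifferentiableAt ℝ (px u) p := fun p => hux.differentiable (by simp) p
  have hduxx : ∀ p, DifferentiableAt ℝ (px (px u)) p := fun p => huxx.differentiable (by simp) p
  have hduux : ∀ p, DifferentiableAt ℝ (fun q => u q * px u q) p :=
    fun p => (hdu p).mul (hdux p)
  -- the derivative of u² is 2 u u_x
  have hsq : (px (fun q => (u q) ^ 2)) = fun p => 2 * (u p * px u p) := by
    funext p
    have : px (fun q => (u q) ^ 2) p = px (fun q => u q * u q) p := by
      congr 1; funext q; ring
    rw [this, px_mul (hdu p) (hdu p)]; ring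
  have key : ∀ p, d2 ω2 p - wedge2 ω1 ω2 p =
      -(1 / 2) * pt (px u) p + (1 / 2) * px (px (fun q => (u q) ^ 2)) p
        - px (px (px u)) p + (px u p) ^ 2 := by
    intro p
    have h1 : px (fun q => u q * px u q - px (px u) q) p =
        (px u p * px u p + u p * px (px u) p) - px (px (px u)) p := by
      rw [px_sub (hduux p) (hduxx p), px_mul (hdu p) (hdux p)]
    have h2 : pt (fun q => px u q / 2) p = pt (px u) p / 2 := pt_div_const 2 (hdux p)
    have h3 : px (px (fun q => (u q) ^ 2)) p = 2 * (px u p * px u p + u p * px (px u) p) := by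
      rw [hsq, px_const_mul 2 (hduux p), px_mul (hdu p) (hdux p)]
    subst hω1 hω2
    simp only [d2, wedge2, h1, h2, h3]
    ring
  refine ⟨key, ?_⟩
  constructor
  · intro h p
    have := (key p).symm.trans (h p)
    linarith
  · intro h p
    rw [key p, h p]
    ring
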